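/- Let R be a commutative ring. For a set X, let 𝒜(X) be the free R-module on X. A correspondence (A, s, t) from X to Y with s having finite fibers induces an R-linear map 𝒜(A,s,t) : 𝒜(X) → 𝒜(Y) sending a generator x to Σ_{a ∈ s⁻¹(x)} t(a). Then for composable locally finite correspondences (A, s_A, t_A) from X to Y and (B, s_B, t_B) from Y to Z, the linearization of the composite correspondence B ×_Y A equals the composite 𝒜(B, s_B, t_B) ∘ 𝒜(A, s_A, t_A). -/

import Mathlib

open Finsupp

/-- The linearization of a locally finite correspondence `(A, s, t)` from `X` to `Y`:
the `R`-linear map `R⟨X⟩ → R⟨Y⟩` sending a generator `x` to `Σ_{a ∈ s⁻¹(x)} t(a)`. -/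
noncomputable def linearize (R : Type*) [CommRing R] {X Y A : Type*}
    (s : A → X) (t : A → Y) (h : ∀ x : X, (s ⁻¹' {x}).Finite) :
    (X →₀ R) →ₗ[R] (Y →₀ R) :=
  Finsupp.lsum R (fun x => ∑ a ∈ (h x).toFinset, Finsupp.lsingle (t a))

/-! The fiber of `B ×_Y A` over `x` is the disjoint union, over `a ∈ s_A⁻¹(x)`, of the fibers
`s_B⁻¹(t_A a)`; so both sides send the generator `x` to the same double sum of generators. -/

theorem linearize_single (R : Type*) [CommRing R] {X Y A : Type*} (s : A → X) (t : A → Y)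
    (h : ∀ x : X, (s ⁻¹' {x}).Finite) (x : X) (r : R) :
    linearize R s t h (single x r) = ∑ a ∈ (h x).toFinset, single (t a) r := by
  simp [linearize]

theorem Finset.sum_fiber_pullback {X Y A B M : Type*} [AddCommMonoid M]
    (sA : A → X) (tA : A → Y) (sB : B → Y)
    (hA : ∀ x : X, (sA ⁻¹' {x}).Finite) (hB : ∀ y : Y, (sB ⁻¹' {y}).Finite)
    (hC : ∀ x : X, ((fun c : {p : B × A // tA p.2 = sB p.1} => sA c.1.2) ⁻¹' {x}).Finite)
    (x : X) (f : B × A → M) :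
    ∑ c ∈ (hC x).toFinset, f c.1 =
      ∑ a ∈ (hA x).toFinset, ∑ b ∈ (hB (tA a)).toFinset, f (b, a) := by
  rw [Finset.sum_sigma']
  refine Finset.sum_bij' (fun c _ => ⟨c.1.2, c.1.1⟩)
    (fun p hp => ⟨(p.2, p.1), by simp_all [eq_comm]⟩) ?_ ?_ ?_ ?_ ?_ <;>
    simp_all [eq_comm]

theorem stmt_8 (R : Type*) [CommRing R] {X Y Z A B : Type*}
    (sA : A → X) (tA : A → Y) (sB : B → Y) (tB : B → Z)
    (hA : ∀ x : X, (sA ⁻¹' {x}).Finite)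
    (hB : ∀ y : Y, (sB ⁻¹' {y}).Finite)
    (hC : ∀ x : X,
      ((fun c : {p : B × A // tA p.2 = sB p.1} => sA c.1.2) ⁻¹' {x}).Finite) :
    linearize R (fun c : {p : B × A // tA p.2 = sB p.1} => sA c.1.2)
        (fun c => tB c.1.1) hC
      = (linearize R sB tB hB).comp (linearize R sA tA hA) := by
  refine Finsupp.lhom_ext fun x r => ?_
  simp only [LinearMap.comp_apply, linearize_single, map_sum]
  exact Finset.sum_fiber_pullback sA tA sB hA hB hC x fun p => single (tB p.1) r
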